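/- Under hypothesis (H), fix a geodesic ray γ from o and x ∈ S with projection π(x) = γ(k(x)). Then for every n ≥ k(x) one has G(x,γ(n)) · G(o,γ(k(x))) = G(o,γ(n)) · G(x,γ(k(x))); consequently the Martin kernel K(x) = lim_{n→∞} G(x,γ(n))/G(o,γ(n)) exists and equals G(x,π(x))/G(o,π(x)). -/

import Mathlib

/-!
In a tree, the vertex `π(x) = γ(k(x))` separates both `x` and `o = γ(0)` from every `γ(n)` with
`n ≥ k(x)`: the ray leaves `x` at `π(x)` and never comes back. Splitting a trajectory at its first
visit to `π(x)` gives `G(a, γ(n)) = F(a, π(x)) · G(π(x), γ(n))` for `a ∈ {x, o}`, where `F` is the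
first-passage generating function, and the identity follows by cross-multiplying.

Hypothesis (H) makes the Green function finite: with `t = (1 + η)⁻¹` the function `t ^ d(·, y)`
is contracted by the factor `1 - η² / 2` in each step (at most one neighbour is closer to `y`, and
it is chosen with probability at most `1/2 - η`), so `p_n(x, y) ≤ (1 - η² / 2) ^ n`.
-/

open Filter
open scoped Classical Topology

noncomputable section

/-- The `n`-step transition probabilities of the nearest-neighbour walk with
one-step transition probabilities `p`. -/
def pn {S : Type*} (p : S → S → ℝ) : ℕ → S → S → ℝ
  | 0, x, y => if x = y then 1 else 0
  | n + 1, x, y => ∑' z, p x z * pn p n z y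

/-- The Green function `G(x,y) = ∑_n p_n(x,y)`. -/
def green {S : Type*} (p : S → S → ℝ) (x y : S) : ℝ := ∑' n, pn p n x y


namespace SimpleGraph

variable {V : Type*} {G : SimpleGraph V}

theorem IsAcyclic.length_eq_dist_of_isPath (hG : G.IsAcyclic) {u v : V} {P : G.Walk u v}
    (hP : P.IsPath) : P.length = G.dist u v := by
  obtain ⟨Q, hQ, hlen⟩ := P.reachable.exists_path_of_dist
  rw [← hlen, Subtype.mk.inj <| hG.subsingleton_path u v |>.elim ⟨P, hP⟩ ⟨Q, hQ⟩]

theorem IsAcyclic.exists_adj_dist_add_one_eq (hG : G.IsAcyclic) (hconn : G.Connected)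
    {z y : V} (hzy : z ≠ y) :
    ∃ c, G.Adj z c ∧ G.dist c y + 1 = G.dist z y ∧
      ∀ w, G.Adj z w → w ≠ c → G.dist w y = G.dist z y + 1 := by
  obtain ⟨P, hP, hlen⟩ := hconn.exists_path_of_dist z y
  have hnil : ¬ P.Nil := fun h => hzy h.eq
  refine ⟨P.snd, P.adj_snd hnil, ?_, fun w hzw hwc => ?_⟩
  · rw [← hG.length_eq_dist_of_isPath hP.tail, ← hlen, P.length_tail_add_one hnil]
  · have hw : w ∉ P.support := fun hw => hwc (hG.eq_snd_of_adj_start hP hzw hw)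
    rw [← hG.length_eq_dist_of_isPath (hP.cons hw (h := hzw.symm)), Walk.length_cons, hlen]

theorem IsAcyclic.mem_support_of_adj_of_dist_eq_add_one (hG : G.IsAcyclic) (hconn : G.Connected)
    {x w y : V} (hwy : G.Adj w y) (hd : G.dist x y = G.dist x w + 1) (W : G.Walk x y) :
    w ∈ W.support := by
  classical
  obtain ⟨Q, hQ, hlen⟩ := hconn.exists_path_of_dist x w
  have hy : y ∉ Q.support := fun hy => by
    have := (dist_le (Q.takeUntil y hy)).trans (Q.length_takeUntil_le_length hy)
    omega
  exact W.support_bypass_subset_support <|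
    hG.mem_support_of_ne_mem_support_of_adj_of_isPath W.bypass_isPath hQ hwy.symm hy

theorem IsAcyclic.mem_support_of_ray (hG : G.IsAcyclic) (hconn : G.Connected) {γ : ℕ → V}
    (hadj : ∀ n, G.Adj (γ n) (γ (n + 1))) (hinj : Function.Injective γ) {x : V} {k : ℕ}
    (hd : G.dist x (γ (k + 1)) = G.dist x (γ k) + 1) {n : ℕ} (hkn : k ≤ n)
    (W : G.Walk x (γ n)) : γ k ∈ W.support := by
  induction n, hkn using Nat.le_induction with
  | base => exact W.end_mem_support
  | succ n hkn ih =>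
    rcases hkn.eq_or_lt with rfl | hlt
    · exact hG.mem_support_of_adj_of_dist_eq_add_one hconn (hadj k) hd W
    · have h := ih (W.concat (hadj n).symm)
      rw [Walk.support_concat, List.mem_append, List.mem_singleton] at h
      exact h.resolve_right fun h => hlt.ne (hinj h)

end SimpleGraph

/-- `firstPassage p n x w` is the probability that the walk started at `x` first visits `w` at
time `n`. -/
def firstPassage {S : Type*} (p : S → S → ℝ) : ℕ → S → S → ℝ
  | 0, x, w => if x = w then 1 else 0
  | n + 1, x, w => if x = w then 0 else ∑' z, p x z * firstPassage p n z w

section RandomWalk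

open SimpleGraph Finset

variable {S : Type*} {G : SimpleGraph S} [∀ x : S, Fintype (G.neighborSet x)] {p : S → S → ℝ}

theorem pn_nonneg (hp_nn : ∀ x y, 0 ≤ p x y) (n : ℕ) (x y : S) : 0 ≤ pn p n x y := by
  induction n generalizing x with
  | zero => unfold pn; positivity
  | succ n ih => exact tsum_nonneg fun z => mul_nonneg (hp_nn x z) (ih z)

theorem tsum_eq_sum_neighborFinset (hp_zero : ∀ x y, ¬ G.Adj x y → p x y = 0) (x : S)
    (f : S → ℝ) : ∑' z, p x z * f z = ∑ z ∈ G.neighborFinset x, p x z * f z :=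
  tsum_eq_sum fun z hz => by rw [hp_zero x z (by simpa using hz), zero_mul]

theorem pn_succ (hp_zero : ∀ x y, ¬ G.Adj x y → p x y = 0) (n : ℕ) (x y : S) :
    pn p (n + 1) x y = ∑ z ∈ G.neighborFinset x, p x z * pn p n z y :=
  tsum_eq_sum_neighborFinset hp_zero x _

theorem pn_pos_of_walk (hp_adj : ∀ x y, G.Adj x y → 0 < p x y) (hp_nn : ∀ x y, 0 ≤ p x y)
    (hp_zero : ∀ x y, ¬ G.Adj x y → p x y = 0) {x y : S} (W : G.Walk x y) :
    0 < pn p W.length x y := by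
  induction W with
  | nil => simp [pn]
  | @cons a b c hab W ih =>
    rw [Walk.length_cons, pn_succ hp_zero]
    calc 0 < p a b * pn p W.length b c := mul_pos (hp_adj a b hab) ih
      _ ≤ _ := single_le_sum (fun z _ => mul_nonneg (hp_nn a z) (pn_nonneg hp_nn _ z c))
          ((G.mem_neighborFinset a b).2 hab)

theorem green_pos (hp_adj : ∀ x y, G.Adj x y → 0 < p x y) (hp_nn : ∀ x y, 0 ≤ p x y)
    (hp_zero : ∀ x y, ¬ G.Adj x y → p x y = 0) {x y : S} (hxy : G.Reachable x y)
    (hsum : Summable fun n => pn p n x y) : 0 < green p x y := by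
  obtain ⟨W⟩ := hxy
  exact (pn_pos_of_walk hp_adj hp_nn hp_zero W).trans_le
    (hsum.le_tsum _ fun n _ => pn_nonneg hp_nn n x y)

theorem firstPassage_nonneg (hp_nn : ∀ x y, 0 ≤ p x y) (n : ℕ) (x w : S) :
    0 ≤ firstPassage p n x w := by
  induction n generalizing x with
  | zero => unfold firstPassage; positivity
  | succ n ih =>
    unfold firstPassage
    split_ifs
    · exact le_rfl
    · exact tsum_nonneg fun z => mul_nonneg (hp_nn x z) (ih z)

theorem firstPassage_le_pn (hp_nn : ∀ x y, 0 ≤ p x y) (hp_zero : ∀ x y, ¬ G.Adj x y → p x y = 0)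
    (n : ℕ) (x w : S) : firstPassage p n x w ≤ pn p n x w := by
  induction n generalizing x with
  | zero => rfl
  | succ n ih =>
    rw [firstPassage]
    split_ifs
    · exact pn_nonneg hp_nn _ x w
    · rw [tsum_eq_sum_neighborFinset hp_zero, pn_succ hp_zero]
      exact sum_le_sum fun z _ => mul_le_mul_of_nonneg_left (ih z) (hp_nn x z)

theorem sum_firstPassage_self (n : ℕ) (w y : S) :
    ∑ ij ∈ antidiagonal n, firstPassage p ij.1 w w * pn p ij.2 w y = pn p n w y := by
  rw [sum_eq_single_of_mem (0, n) (by simp)]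
  · simp [firstPassage]
  · rintro ⟨_ | i, j⟩ hij hne
    · simp_all
    · simp [firstPassage]

theorem pn_eq_sum_firstPassage (hp_zero : ∀ x y, ¬ G.Adj x y → p x y = 0) {w y : S} (n : ℕ)
    {x : S} (hsep : ∀ W : G.Walk x y, w ∈ W.support) :
    pn p n x y = ∑ ij ∈ antidiagonal n, firstPassage p ij.1 x w * pn p ij.2 w y := by
  induction n generalizing x with
  | zero =>
    obtain rfl | hxw := eq_or_ne x w
    · exact (sum_firstPassage_self 0 x y).symm
    have hxy : x ≠ y := by
      rintro rfl
      exact hxw (by simpa [eq_comm] using hsep Walk.nil)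
    simp [pn, firstPassage, hxw, hxy]
  | succ n ih =>
    obtain rfl | hxw := eq_or_ne x w
    · exact (sum_firstPassage_self _ x y).symm
    have hsep' : ∀ z ∈ G.neighborFinset x, ∀ W : G.Walk z y, w ∈ W.support := fun z hz W =>
      (List.mem_cons.1 (hsep (.cons ((G.mem_neighborFinset x z).1 hz) W))).resolve_left
        (Ne.symm hxw)
    calc pn p (n + 1) x y
        = ∑ z ∈ G.neighborFinset x, p x z *
            ∑ ij ∈ antidiagonal n, firstPassage p ij.1 z w * pn p ij.2 w y := by
          rw [pn_succ hp_zero]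
          refine sum_congr rfl fun z hz => ?_
          rw [ih (hsep' z hz)]
      _ = ∑ ij ∈ antidiagonal n, firstPassage p (ij.1 + 1) x w * pn p ij.2 w y := by
          simp only [firstPassage, hxw, if_false, tsum_eq_sum_neighborFinset hp_zero, mul_sum,
            sum_mul]
          rw [sum_comm]
          refine sum_congr rfl fun ij _ => sum_congr rfl fun z _ => by ring
      _ = _ := by
          rw [Nat.sum_antidiagonal_succ]
          simp [firstPassage, hxw]

theorem green_eq_tsum_firstPassage_mul (hp_nn : ∀ x y, 0 ≤ p x y)
    (hp_zero : ∀ x y, ¬ G.Adj x y → p x y = 0) {x w y : S}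
    (hxw : Summable fun n => pn p n x w) (hwy : Summable fun n => pn p n w y)
    (hsep : ∀ W : G.Walk x y, w ∈ W.support) :
    green p x y = (∑' n, firstPassage p n x w) * green p w y := by
  have hf : Summable fun n => firstPassage p n x w :=
    hxw.of_nonneg_of_le (fun n => firstPassage_nonneg hp_nn n x w)
      (fun n => firstPassage_le_pn hp_nn hp_zero n x w)
  rw [green, green, tsum_mul_tsum_eq_tsum_sum_antidiagonal_of_summable_norm hf.norm hwy.norm]
  exact tsum_congr fun n => pn_eq_sum_firstPassage hp_zero n hsep

theorem green_mul_green_eq_of_separates (hp_nn : ∀ x y, 0 ≤ p x y)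
    (hp_zero : ∀ x y, ¬ G.Adj x y → p x y = 0) (hsum : ∀ x y, Summable fun n => pn p n x y)
    {x o w y : S} (hx : ∀ W : G.Walk x y, w ∈ W.support) (ho : ∀ W : G.Walk o y, w ∈ W.support) :
    green p x y * green p o w = green p o y * green p x w := by
  have hw : ∀ {a}, ∀ W : G.Walk a w, w ∈ W.support := fun W => W.end_mem_support
  rw [green_eq_tsum_firstPassage_mul hp_nn hp_zero (hsum x w) (hsum w y) hx,
    green_eq_tsum_firstPassage_mul hp_nn hp_zero (hsum o w) (hsum w y) ho,
    green_eq_tsum_firstPassage_mul hp_nn hp_zero (hsum o w) (hsum w w) hw,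
    green_eq_tsum_firstPassage_mul hp_nn hp_zero (hsum x w) (hsum w w) hw]
  ring

end RandomWalk

theorem inv_one_add_le_one_sub_sq_div_two {η : ℝ} (hη : 0 < η) (hη1 : η < 1 / 2) :
    (1 + η)⁻¹ ≤ 1 - η ^ 2 / 2 := by
  rw [inv_le_iff_one_le_mul₀ (by linarith)]
  nlinarith

theorem add_mul_inv_sq_le {η q : ℝ} (hη : 0 < η) (hq : q ≤ 1 / 2 - η) :
    q + (1 - q) * (1 + η)⁻¹ ^ 2 ≤ (1 - η ^ 2 / 2) * (1 + η)⁻¹ := by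
  have hs : (0 : ℝ) < 1 + η := by linarith
  rw [← sub_nonneg]
  have e : (1 - η ^ 2 / 2) * (1 + η)⁻¹ - (q + (1 - q) * (1 + η)⁻¹ ^ 2)
      = ((1 - η ^ 2 / 2) * (1 + η) - (q * (1 + η) ^ 2 + (1 - q))) * (1 + η)⁻¹ ^ 2 := by
    field_simp
  rw [e]
  exact mul_nonneg (by nlinarith [mul_nonneg (sub_nonneg.2 hq) (by positivity : 0 ≤ 2 * η + η ^ 2)])
    (by positivity)

section Transience

open SimpleGraph Finset

variable {S : Type*} {G : SimpleGraph S} [∀ x : S, Fintype (G.neighborSet x)] {p : S → S → ℝ}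
  {η : ℝ}

theorem lt_half_of_le_half_sub (hp_adj : ∀ x y, G.Adj x y → 0 < p x y)
    (hp_sum : ∀ x, ∑ y ∈ G.neighborFinset x, p x y = 1)
    (hHu : ∀ x y, G.Adj x y → p x y ≤ 1 / 2 - η) (x : S) : η < 1 / 2 := by
  obtain ⟨y, hy⟩ : (G.neighborFinset x).Nonempty :=
    nonempty_of_sum_ne_zero (by rw [hp_sum]; exact one_ne_zero)
  have hxy := (G.mem_neighborFinset x y).1 hy
  linarith [hp_adj x y hxy, hHu x y hxy]

theorem sum_mul_inv_pow_dist_le (hconn : G.Connected) (hacyc : G.IsAcyclic)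
    (hp_sum : ∀ x, ∑ y ∈ G.neighborFinset x, p x y = 1) (hη : 0 < η) (hη1 : η < 1 / 2)
    (hHu : ∀ x y, G.Adj x y → p x y ≤ 1 / 2 - η) (y z : S) :
    ∑ w ∈ G.neighborFinset z, p z w * (1 + η)⁻¹ ^ G.dist w y
      ≤ (1 - η ^ 2 / 2) * (1 + η)⁻¹ ^ G.dist z y := by
  obtain rfl | hzy := eq_or_ne z y
  · have hw : ∀ w ∈ G.neighborFinset z, p z w * (1 + η)⁻¹ ^ G.dist w z = p z w * (1 + η)⁻¹ :=
      fun w hw => by rw [dist_eq_one_iff_adj.2 ((G.mem_neighborFinset z w).1 hw).symm, pow_one]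
    rw [sum_congr rfl hw, ← sum_mul, hp_sum, one_mul, dist_self, pow_zero, mul_one]
    exact inv_one_add_le_one_sub_sq_div_two hη hη1
  obtain ⟨c, hzc, hc, hfar⟩ := hacyc.exists_adj_dist_add_one_eq hconn hzy
  have hcN : c ∈ G.neighborFinset z := (G.mem_neighborFinset z c).2 hzc
  have hrest : ∑ w ∈ (G.neighborFinset z).erase c, p z w = 1 - p z c := by
    rw [← hp_sum z, ← add_sum_erase _ _ hcN, add_sub_cancel_left]
  have hfar' : ∀ w ∈ (G.neighborFinset z).erase c,
      p z w * (1 + η)⁻¹ ^ G.dist w y = p z w * (1 + η)⁻¹ ^ (G.dist c y + 2) := fun w hw => by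
    rw [mem_erase, mem_neighborFinset] at hw
    rw [hfar w hw.2 hw.1, ← hc]
  rw [← add_sum_erase _ _ hcN, sum_congr rfl hfar', ← sum_mul, hrest, ← hc]
  calc p z c * (1 + η)⁻¹ ^ G.dist c y + (1 - p z c) * (1 + η)⁻¹ ^ (G.dist c y + 2)
      = (p z c + (1 - p z c) * (1 + η)⁻¹ ^ 2) * (1 + η)⁻¹ ^ G.dist c y := by ring
    _ ≤ (1 - η ^ 2 / 2) * (1 + η)⁻¹ * (1 + η)⁻¹ ^ G.dist c y := by
      gcongr
      exact add_mul_inv_sq_le hη (hHu z c hzc)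
    _ = (1 - η ^ 2 / 2) * (1 + η)⁻¹ ^ (G.dist c y + 1) := by ring

theorem pn_le_geometric (hconn : G.Connected) (hacyc : G.IsAcyclic) (hp_nn : ∀ x y, 0 ≤ p x y)
    (hp_zero : ∀ x y, ¬ G.Adj x y → p x y = 0) (hp_sum : ∀ x, ∑ y ∈ G.neighborFinset x, p x y = 1)
    (hη : 0 < η) (hη1 : η < 1 / 2) (hHu : ∀ x y, G.Adj x y → p x y ≤ 1 / 2 - η)
    (n : ℕ) (x y : S) : pn p n x y ≤ (1 - η ^ 2 / 2) ^ n * (1 + η)⁻¹ ^ G.dist x y := by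
  have hr : 0 ≤ 1 - η ^ 2 / 2 := by nlinarith
  induction n generalizing x with
  | zero =>
    rw [pn, pow_zero, one_mul]
    split_ifs with hxy
    · rw [hxy, dist_self, pow_zero]
    · positivity
  | succ n ih =>
    calc pn p (n + 1) x y
        ≤ ∑ w ∈ G.neighborFinset x, p x w * ((1 - η ^ 2 / 2) ^ n * (1 + η)⁻¹ ^ G.dist w y) := by
          rw [pn_succ hp_zero]
          exact sum_le_sum fun w _ => mul_le_mul_of_nonneg_left (ih w) (hp_nn x w)
      _ = (1 - η ^ 2 / 2) ^ n * ∑ w ∈ G.neighborFinset x, p x w * (1 + η)⁻¹ ^ G.dist w y := by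
          rw [mul_sum]
          exact sum_congr rfl fun w _ => by ring
      _ ≤ (1 - η ^ 2 / 2) ^ n * ((1 - η ^ 2 / 2) * (1 + η)⁻¹ ^ G.dist x y) := by
          gcongr
          exact sum_mul_inv_pow_dist_le hconn hacyc hp_sum hη hη1 hHu y x
      _ = (1 - η ^ 2 / 2) ^ (n + 1) * (1 + η)⁻¹ ^ G.dist x y := by ring

theorem summable_pn (hconn : G.Connected) (hacyc : G.IsAcyclic) (hp_nn : ∀ x y, 0 ≤ p x y)
    (hp_zero : ∀ x y, ¬ G.Adj x y → p x y = 0) (hp_sum : ∀ x, ∑ y ∈ G.neighborFinset x, p x y = 1)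
    (hη : 0 < η) (hη1 : η < 1 / 2) (hHu : ∀ x y, G.Adj x y → p x y ≤ 1 / 2 - η) (x y : S) :
    Summable fun n => pn p n x y := by
  have hr : 0 ≤ 1 - η ^ 2 / 2 := by nlinarith
  have ht : (1 + η)⁻¹ ^ G.dist x y ≤ 1 :=
    pow_le_one₀ (by positivity) (inv_le_one_of_one_le₀ (by linarith))
  refine (summable_geometric_of_lt_one hr (by nlinarith)).of_nonneg_of_le
    (fun n => pn_nonneg hp_nn n x y) fun n => ?_
  calc pn p n x y ≤ (1 - η ^ 2 / 2) ^ n * (1 + η)⁻¹ ^ G.dist x y :=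
        pn_le_geometric hconn hacyc hp_nn hp_zero hp_sum hη hη1 hHu n x y
    _ ≤ (1 - η ^ 2 / 2) ^ n := mul_le_of_le_one_right (pow_nonneg hr n) ht

end Transience

section GeodesicRay

open SimpleGraph

variable {S : Type*} {G : SimpleGraph S} {γ : ℕ → S}

theorem dist_zero_eq_of_dist_eq_abs_sub
    (hγ : ∀ m n : ℕ, (G.dist (γ m) (γ n) : ℤ) = |(m : ℤ) - (n : ℤ)|) (n : ℕ) :
    G.dist (γ 0) (γ n) = n := by
  simpa using hγ 0 n

theorem adj_succ_of_dist_eq_abs_sub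
    (hγ : ∀ m n : ℕ, (G.dist (γ m) (γ n) : ℤ) = |(m : ℤ) - (n : ℤ)|) (n : ℕ) :
    G.Adj (γ n) (γ (n + 1)) := by
  rw [← dist_eq_one_iff_adj, ← Nat.cast_inj (R := ℤ), hγ]
  simp

theorem injective_of_dist_eq_abs_sub
    (hγ : ∀ m n : ℕ, (G.dist (γ m) (γ n) : ℤ) = |(m : ℤ) - (n : ℤ)|) : Function.Injective γ :=
  fun m n h => by
    have := hγ m n
    rw [h, dist_self, Nat.cast_zero, eq_comm, abs_eq_zero, sub_eq_zero] at this
    exact_mod_cast this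

end GeodesicRay

/-- Under hypothesis (H), for a geodesic ray `γ` from `o`
with projection `π(x) = γ (k x)`: for every `n ≥ k x`,
`G(x,γ n) ⬝ G(o, γ (k x)) = G(o, γ n) ⬝ G(x, γ (k x))`; consequently the Martin
kernel `K(x) = lim_n G(x,γ n)/G(o,γ n)` exists and equals
`G(x,π(x))/G(o,π(x))`. -/
theorem martin_kernel_exists
    {S : Type*} [Countable S] (G : SimpleGraph S)
    [∀ x : S, Fintype (G.neighborSet x)]
    (hconn : G.Connected) (hacyc : G.IsAcyclic)
    (p : S → S → ℝ)
    (hp_pos : ∀ x y, 0 < p x y ↔ G.Adj x y)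
    (hp_zero : ∀ x y, ¬ G.Adj x y → p x y = 0)
    (hp_sum : ∀ x, ∑ y ∈ G.neighborFinset x, p x y = 1)
    (ε η : ℝ) (hε : 0 < ε) (hη : 0 < η)
    (hH : ∀ x y, G.Adj x y → ε ≤ p x y ∧ p x y ≤ 1 / 2 - η)
    (o : S) (γ : ℕ → S) (hγ0 : γ 0 = o)
    (hγ : ∀ m n : ℕ, (G.dist (γ m) (γ n) : ℤ) = |(m : ℤ) - (n : ℤ)|)
    (k : S → ℕ)
    (hk_min : ∀ (x : S) (n : ℕ), G.dist x (γ (k x)) ≤ G.dist x (γ n))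
    (hk_uniq : ∀ (x : S) (n : ℕ), G.dist x (γ n) ≤ G.dist x (γ (k x)) → n = k x) :
    ∀ x : S,
      (∀ n : ℕ, k x ≤ n →
        green p x (γ n) * green p o (γ (k x)) =
          green p o (γ n) * green p x (γ (k x))) ∧
      Tendsto (fun n => green p x (γ n) / green p o (γ n)) atTop
        (𝓝 (green p x (γ (k x)) / green p o (γ (k x)))) := by
  intro x
  have hp_adj : ∀ x y, G.Adj x y → 0 < p x y := fun a b => (hp_pos a b).2
  have hp_nn : ∀ x y, 0 ≤ p x y := fun a b =>
    (em (G.Adj a b)).elim (fun h => (hp_adj a b h).le) fun h => (hp_zero a b h).ge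
  have hHu : ∀ x y, G.Adj x y → p x y ≤ 1 / 2 - η := fun a b h => (hH a b h).2
  have hη1 := lt_half_of_le_half_sub hp_adj hp_sum hHu o
  have hsum := summable_pn hconn hacyc hp_nn hp_zero hp_sum hη hη1 hHu
  have hadj := adj_succ_of_dist_eq_abs_sub hγ
  have hinj := injective_of_dist_eq_abs_sub hγ
  have hdx : G.dist x (γ (k x + 1)) = G.dist x (γ (k x)) + 1 := by
    have hfar : ¬ G.dist x (γ (k x + 1)) ≤ G.dist x (γ (k x)) := fun h => by
      simpa using hk_uniq x _ h
    have := (hadj (k x)).diff_dist_adj (u := x)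
    omega
  have hdo : G.dist o (γ (k x + 1)) = G.dist o (γ (k x)) + 1 := by
    simp only [← hγ0, dist_zero_eq_of_dist_eq_abs_sub hγ]
  have key : ∀ n, k x ≤ n → green p x (γ n) * green p o (γ (k x)) =
      green p o (γ n) * green p x (γ (k x)) := fun n hn =>
    green_mul_green_eq_of_separates hp_nn hp_zero hsum
      (hacyc.mem_support_of_ray hconn hadj hinj hdx hn)
      (hacyc.mem_support_of_ray hconn hadj hinj hdo hn)
  refine ⟨key, tendsto_const_nhds.congr' ?_⟩
  filter_upwards [eventually_ge_atTop (k x)] with n hn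
  have hpos := fun y => green_pos hp_adj hp_nn hp_zero (hconn o y) (hsum o y)
  rw [div_eq_div_iff (hpos _).ne' (hpos _).ne', key n hn]
  ring

end
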